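/- arXiv:1302.6164 — 2 statements merged into one kernel-verified Lean document; each statement's English description precedes it below -/
import Mathlib

section
/- Let K be an o-symmetric plane convex body with norm ‖·‖_K. For x, y on the boundary of K, x is Birkhoff-orthogonal to y (x is parallel to a line supporting K at y) if and only if area(conv{o, x, y}) = max{area(conv{o, x, z}) : z ∈ K}. -/
open MeasureTheory Metric Pointwise

/-- Volume of the k-dimensional Euclidean unit ball. -/
noncomputable def ubVol (k : ℕ) : ℝ :=
  (volume (closedBall (0 : EuclideanSpace ℝ (Fin k)) 1)).toReal

/-- (n-1)-dimensional volume of the orthogonal projection of `K` onto the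
hyperplane through the origin perpendicular to `u`. -/
noncomputable def projVol {n : ℕ} (K : Set (EuclideanSpace ℝ (Fin n)))
    (u : EuclideanSpace ℝ (Fin n)) : ℝ :=
  (volume ((Submodule.orthogonalProjectionOnto (ℝ ∙ u)ᗮ) '' K)).toReal

/-- Length of a maximal chord of `K` parallel to `u`:
`d_K(u) = max {t ≥ 0 : K ∩ (t • u + K) ≠ ∅}`. -/
noncomputable def maxChord {n : ℕ} (K : Set (EuclideanSpace ℝ (Fin n)))
    (u : EuclideanSpace ℝ (Fin n)) : ℝ :=
  sSup {t : ℝ | 0 ≤ t ∧ (K ∩ ((t • u) +ᵥ K)).Nonempty}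

/-- Support function of `K`. -/
noncomputable def suppFn {n : ℕ} (K : Set (EuclideanSpace ℝ (Fin n)))
    (u : EuclideanSpace ℝ (Fin n)) : ℝ :=
  sSup ((fun x => (inner ℝ x u : ℝ)) '' K)

/-- Width of `K` in direction `u` (for a unit vector `u`). -/
noncomputable def widthFn {n : ℕ} (K : Set (EuclideanSpace ℝ (Fin n)))
    (u : EuclideanSpace ℝ (Fin n)) : ℝ :=
  suppFn K u + suppFn K (-u)

/-- Two sets touch: they intersect, but their interiors are disjoint. -/
def Touching {n : ℕ} (A B : Set (EuclideanSpace ℝ (Fin n))) : Prop :=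
  (A ∩ B).Nonempty ∧ Disjoint (interior A) (interior B)

/-- A convex body: compact, convex, with nonempty interior. -/
def IsConvexBody {n : ℕ} (K : Set (EuclideanSpace ℝ (Fin n))) : Prop :=
  Convex ℝ K ∧ IsCompact K ∧ (interior K).Nonempty

/-- An ellipsoid: the image of the unit ball under an invertible affine map. -/
def IsEllipsoid {n : ℕ} (K : Set (EuclideanSpace ℝ (Fin n))) : Prop :=
  ∃ f : EuclideanSpace ℝ (Fin n) ≃ᵃ[ℝ] EuclideanSpace ℝ (Fin n),
    K = f '' closedBall 0 1

/-- `x` is Birkhoff-orthogonal to `y` w.r.t. the body `K`: the line through `y` with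
direction `x` supports `K` at `y`. -/
def BirkhoffOrth (K : Set (EuclideanSpace ℝ (Fin 2))) (x y : EuclideanSpace ℝ (Fin 2)) : Prop :=
  y ∈ K ∧ ∀ t : ℝ, y + t • x ∉ interior K

/-!
Let `f = det(x, ·)`: its level sets are the lines parallel to `x`, and the area of
`conv{o, x, z}` is a fixed multiple of `|f z|`. If the line `{f = f y}` met the interior of `K`
at some `w`, moving `w` slightly to either side of that line would increase `|f|` on one side.
Conversely, if some `z ∈ K` had `|f z| > |f y|`, then the point `(f y / f z) • z` of the segment
`[-z, z]` would lie on the line `{f = f y}` and, since `o` is an interior point of `K` by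
symmetry, in the interior of `K`.
-/

open Topology Filter

section Convex
variable {E : Type*} [AddCommGroup E] [Module ℝ E] [TopologicalSpace E]
  [IsTopologicalAddGroup E] [ContinuousSMul ℝ E] {K : Set E}

theorem Convex.zero_mem_interior_of_neg_eq (hconv : Convex ℝ K) (hsymm : K = -K)
    (hint : (interior K).Nonempty) : (0 : E) ∈ interior K := by
  obtain ⟨a, ha⟩ := hint
  have hna : -a ∈ K := by rw [hsymm]; simpa using interior_subset ha
  simpa using hconv.combo_interior_self_mem_interior ha hna
    (by norm_num : (0 : ℝ) < 1 / 2) (by norm_num : (0 : ℝ) ≤ 1 / 2) (by norm_num)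

theorem Convex.smul_mem_interior_of_abs_lt (hconv : Convex ℝ K) (hsymm : K = -K)
    (h0 : (0 : E) ∈ interior K) {z : E} (hz : z ∈ K) {a : ℝ} (ha : |a| < 1) :
    a • z ∈ interior K := by
  have hnonneg : ∀ v ∈ K, ∀ b : ℝ, 0 ≤ b → b < 1 → b • v ∈ interior K := by
    intro v hv b hb0 hb1
    simpa using hconv.combo_interior_self_mem_interior h0 hv (sub_pos.2 hb1) hb0 (by ring)
  rcases le_or_gt 0 a with ha0 | ha0
  · exact hnonneg z hz a ha0 (by rwa [abs_of_nonneg ha0] at ha)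
  · have hnz : -z ∈ K := by rw [hsymm]; simpa using hz
    simpa using hnonneg (-z) hnz (-a) (by linarith) (by rwa [abs_of_neg ha0] at ha)

theorem abs_le_of_levelSet_disjoint_interior (hconv : Convex ℝ K) (hsymm : K = -K)
    (h0 : (0 : E) ∈ interior K) (f : E →ₗ[ℝ] ℝ) {y : E}
    (hy : ∀ w, f w = f y → w ∉ interior K) : ∀ z ∈ K, |f z| ≤ |f y| := by
  intro z hz
  by_contra! hlt
  have hfz : f z ≠ 0 := abs_pos.1 ((abs_nonneg _).trans_lt hlt)
  refine hy ((f y / f z) • z) (by simp [hfz]) (hconv.smul_mem_interior_of_abs_lt hsymm h0 hz ?_)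
  rwa [abs_div, div_lt_one (abs_pos.2 hfz)]

theorem levelSet_disjoint_interior_of_abs_le {f : E →ₗ[ℝ] ℝ} (hf : f ≠ 0) {y : E}
    (hmax : ∀ z ∈ K, |f z| ≤ |f y|) : ∀ w, f w = f y → w ∉ interior K := by
  intro w hw hwK
  obtain ⟨u, hu⟩ : ∃ u, f u ≠ 0 := by by_contra! h; exact hf (LinearMap.ext h)
  have hline : ∀ᶠ t in 𝓝 (0 : ℝ), w + t • u ∈ K ∧ w - t • u ∈ K := by
    have hK := mem_interior_iff_mem_nhds.1 hwK
    have hpos : Tendsto (fun t : ℝ => w + t • u) (𝓝 0) (𝓝 w) :=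
      Continuous.tendsto' (by fun_prop) _ _ (by simp)
    have hneg : Tendsto (fun t : ℝ => w - t • u) (𝓝 0) (𝓝 w) :=
      Continuous.tendsto' (by fun_prop) _ _ (by simp)
    exact (hpos.eventually hK).and (hneg.eventually hK)
  obtain ⟨t, ⟨hplus, hminus⟩, ht⟩ :=
    ((hline.filter_mono nhdsWithin_le_nhds).and self_mem_nhdsWithin).exists (f := 𝓝[≠] (0 : ℝ))
  have e₁ := hmax _ hplus
  have e₂ := hmax _ hminus
  simp only [map_add, map_sub, map_smul, smul_eq_mul, hw] at e₁ e₂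
  -- `(a + b)² + (a - b)² = 2a² + 2b²`, so `|a ± b| ≤ |a|` forces `b = 0`
  exact mul_ne_zero ht hu (by nlinarith [sq_le_sq.2 e₁, sq_le_sq.2 e₂])

end Convex

local notation "ℝ²" => EuclideanSpace ℝ (Fin 2)

noncomputable def planeDet (x : ℝ²) : ℝ² →ₗ[ℝ] ℝ :=
  (x 0 • EuclideanSpace.proj 1 - x 1 • EuclideanSpace.proj 0 : ℝ² →L[ℝ] ℝ)

@[simp] theorem planeDet_apply (x z : ℝ²) : planeDet x z = x 0 * z 1 - x 1 * z 0 := by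
  simp [planeDet]

theorem sq_add_sq_eq_norm_sq (x : ℝ²) : x 0 ^ 2 + x 1 ^ 2 = ‖x‖ ^ 2 := by
  simp [EuclideanSpace.norm_sq_eq, Fin.sum_univ_two]

theorem planeDet_ne_zero {x : ℝ²} (hx : x ≠ 0) : planeDet x ≠ 0 := by
  intro h
  have hrot : planeDet x !₂[-x 1, x 0] = ‖x‖ ^ 2 := by
    rw [← sq_add_sq_eq_norm_sq]
    simp [sq]
  rw [h, LinearMap.zero_apply, eq_comm] at hrot
  exact hx (by simpa using hrot)

theorem planeDet_eq_planeDet_iff {x : ℝ²} (hx : x ≠ 0) {y w : ℝ²} :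
    planeDet x w = planeDet x y ↔ ∃ t : ℝ, w = y + t • x := by
  constructor
  · intro h
    have hn : x 0 ^ 2 + x 1 ^ 2 ≠ 0 := by rw [sq_add_sq_eq_norm_sq]; positivity
    -- the coefficient of the orthogonal projection of `w - y` onto `ℝ • x`
    refine ⟨(x 0 * (w 0 - y 0) + x 1 * (w 1 - y 1)) / (x 0 ^ 2 + x 1 ^ 2), ?_⟩
    simp only [planeDet_apply] at h
    ext i
    fin_cases i <;>
      simp only [Fin.zero_eta, Fin.mk_one, PiLp.add_apply, PiLp.smul_apply, smul_eq_mul]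
    · field_simp
      linear_combination -x 1 * h
    · field_simp
      linear_combination x 0 * h
  · rintro ⟨t, rfl⟩
    simp only [planeDet_apply, PiLp.add_apply, PiLp.smul_apply, smul_eq_mul]
    ring

noncomputable def stdTriangle : Set ℝ² :=
  convexHull ℝ (insert 0 (Set.range (EuclideanSpace.basisFun (Fin 2) ℝ)))

theorem volume_convexHull_triangle (x z : ℝ²) :
    volume (convexHull ℝ {0, x, z}) = ENNReal.ofReal |planeDet x z| * volume stdTriangle := by
  set b := (EuclideanSpace.basisFun (Fin 2) ℝ).toBasis
  set T := b.constr ℝ ![x, z]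
  have himage : T '' insert 0 (Set.range (EuclideanSpace.basisFun (Fin 2) ℝ)) = {0, x, z} := by
    rw [Set.image_insert_eq, map_zero, ← Set.range_comp]
    have hbasis : T ∘ EuclideanSpace.basisFun (Fin 2) ℝ = ![x, z] := by
      ext1 i
      simp [T, b]
    rw [hbasis, Matrix.range_cons_cons_empty]
  have hdet : LinearMap.det T = planeDet x z := by
    rw [← LinearMap.det_toMatrix b, Matrix.det_fin_two]
    simp [T, b, LinearMap.toMatrix_apply, mul_comm]
  rw [← himage, ← T.image_convexHull, Measure.addHaar_image_linearMap, hdet, stdTriangle]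

theorem volume_stdTriangle_pos : 0 < volume stdTriangle := by
  have hspan :
      affineSpan ℝ (insert 0 (Set.range (EuclideanSpace.basisFun (Fin 2) ℝ))) = ⊤ := by
    rw [← AffineSubspace.coe_eq_univ_iff, affineSpan_insert_zero,
      ← OrthonormalBasis.coe_toBasis, Module.Basis.span_eq, Submodule.top_coe]
  exact (volume : Measure ℝ²).measure_pos_of_nonempty_interior
    (interior_convexHull_nonempty_iff_affineSpan_eq_top.2 hspan)

theorem volume_stdTriangle_lt_top : volume stdTriangle < ⊤ :=
  ((Set.toFinite _).isCompact_convexHull (𝕜 := ℝ)).measure_lt_top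

theorem volume_convexHull_triangle_toReal (x z : ℝ²) :
    (volume (convexHull ℝ {0, x, z})).toReal =
      |planeDet x z| * (volume stdTriangle).toReal := by
  rw [volume_convexHull_triangle, ENNReal.toReal_mul, ENNReal.toReal_ofReal (abs_nonneg _)]

theorem birkhoffOrth_iff_levelSet_disjoint_interior {K : Set ℝ²} {x y : ℝ²} (hx : x ≠ 0) :
    BirkhoffOrth K x y ↔ y ∈ K ∧ ∀ w, planeDet x w = planeDet x y → w ∉ interior K := by
  simp only [BirkhoffOrth, planeDet_eq_planeDet_iff hx, forall_exists_index]
  rw [forall_comm]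
  simp only [forall_eq]

/-- For boundary points of an o-symmetric plane convex body, `x ⊥_B y` iff the triangle
`conv{o,x,y}` has maximal area among triangles `conv{o,x,z}`, `z ∈ K`. -/
theorem birkhoffOrth_iff_triangle_area_max (K : Set (EuclideanSpace ℝ (Fin 2)))
    (hK : IsConvexBody K) (hsymm : K = -K)
    (x y : EuclideanSpace ℝ (Fin 2)) (hx : x ∈ frontier K) (hy : y ∈ frontier K) :
    BirkhoffOrth K x y ↔
      ∀ z ∈ K, (volume (convexHull ℝ ({0, x, z} : Set (EuclideanSpace ℝ (Fin 2))))).toReal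
        ≤ (volume (convexHull ℝ ({0, x, y} : Set (EuclideanSpace ℝ (Fin 2))))).toReal := by
  obtain ⟨hconv, hcomp, hint⟩ := hK
  have h0 := hconv.zero_mem_interior_of_neg_eq hsymm hint
  have hx0 : x ≠ 0 := by
    rintro rfl
    exact hx.2 h0
  have hc := ENNReal.toReal_pos volume_stdTriangle_pos.ne' volume_stdTriangle_lt_top.ne
  simp only [volume_convexHull_triangle_toReal, mul_le_mul_iff_left₀ hc]
  rw [birkhoffOrth_iff_levelSet_disjoint_interior hx0,
    and_iff_right (hcomp.isClosed.frontier_subset hy)]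
  exact ⟨abs_le_of_levelSet_disjoint_interior hconv hsymm h0 _,
    levelSet_disjoint_interior_of_abs_le (planeDet_ne_zero hx0)⟩
end

section
/- Define c_{n-1}(K) = (1/vol K) · max over supporting hyperplanes σ of K of vol(conv(K ∪ K_σ)), where K_σ is the mirror image of K in σ. For every convex body K in ℝⁿ, c_{n-1}(K) ≥ c^{tr}(K), where c^{tr}(K) is the corresponding maximum over touching translates of K. -/
open MeasureTheory Metric Pointwise

/-- Reflection in the hyperplane `{x : ⟪x,u⟫ = c}` (for a unit vector `u`). -/
noncomputable def reflHyp {n : ℕ} (c : ℝ) (u x : EuclideanSpace ℝ (Fin n)) :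
    EuclideanSpace ℝ (Fin n) :=
  x + (2 * (c - (inner ℝ x u : ℝ))) • u

/-- `c^{tr}(K)`: supremum of the normalized hull volume over touching translates. -/
noncomputable def ctr {n : ℕ} (K : Set (EuclideanSpace ℝ (Fin n))) : ℝ :=
  sSup {r : ℝ | ∃ v : EuclideanSpace ℝ (Fin n), Touching K (v +ᵥ K) ∧
    r = (volume (convexHull ℝ (K ∪ (v +ᵥ K)))).toReal / (volume K).toReal}

/-- `c_{n-1}(K)`: supremum of the normalized hull volume over reflections in supporting
hyperplanes (the supporting hyperplane with outer unit normal `u` is `{x : ⟪x,u⟫ = h_K(u)}`). -/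
noncomputable def crefl {n : ℕ} (K : Set (EuclideanSpace ℝ (Fin n))) : ℝ :=
  sSup {r : ℝ | ∃ u : EuclideanSpace ℝ (Fin n), ‖u‖ = 1 ∧
    r = (volume (convexHull ℝ (K ∪ (reflHyp (suppFn K u) u '' K)))).toReal / (volume K).toReal}

/-!
Let `v ≠ 0` give a touching translate, `d = ‖v‖` and `u = v / d`. Since `K` meets `v + K`,
`d ≤ w_K(u) = h_K(u) + h_K(-u)`. A line `p + ℝu` meeting `K` in parameters from `a` to `b` meets
`conv (K ∪ (v + K))` in parameters within `[a, b + d]`. The hulls of `K` with its mirror images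
in the two supporting hyperplanes orthogonal to `u` contain the segments from `p + a u` and from
`p + b u` to their mirror images, of lengths `2 (h_K(u) - ⟪p, u⟫ - a)` and
`2 (h_K(-u) + ⟪p, u⟫ + b)`, adding up to at least `2 (b + d - a)`. By Fubini along the lines
parallel to `u`, twice the volume of the translate hull is at most the sum of the volumes of
the two reflection hulls, so one of them is at least as large.
-/

open scoped ENNReal

section LineSection

variable {E : Type*} [AddCommGroup E] [Module ℝ E]

def lineSection (S : Set E) (p u : E) : Set ℝ :=
  {t | p + t • u ∈ S}

theorem lineSection_mono {S T : Set E} (h : S ⊆ T) {p u : E} :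
    lineSection S p u ⊆ lineSection T p u :=
  fun _ ht => h ht

theorem Convex.lineSection {S : Set E} (hS : Convex ℝ S) (p u : E) :
    Convex ℝ (lineSection S p u) := by
  intro s hs t ht a b ha hb hab
  show p + (a • s + b • t) • u ∈ S
  convert hS hs ht ha hb hab using 1
  linear_combination (norm := module) (-hab) • p

theorem lineSection_add_segment_subset (K : Set E) (p u : E) {d : ℝ} (hd : 0 ≤ d) :
    lineSection (K + segment ℝ 0 (d • u)) p u ⊆ lineSection K p u + Set.Icc 0 d := by
  rintro t ⟨x, hx, _, ⟨a, θ, ha, hθ, haθ, rfl⟩, hxt⟩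
  refine ⟨t - θ * d, ?_, θ * d, ⟨by positivity, by nlinarith⟩, by ring⟩
  show p + (t - θ * d) • u ∈ K
  convert hx using 1
  linear_combination (norm := module) -hxt

theorem convexHull_union_vadd_subset {K : Set E} (hK : Convex ℝ K) (v : E) :
    convexHull ℝ (K ∪ (v +ᵥ K)) ⊆ K + segment ℝ 0 v := by
  refine convexHull_min (Set.union_subset ?_ ?_) (hK.add (convex_segment 0 v))
  · exact Set.subset_add_left K (left_mem_segment ℝ 0 v)
  · rintro _ ⟨x, hx, rfl⟩
    exact ⟨x, hx, v, right_mem_segment ℝ 0 v, add_comm x v⟩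

end LineSection

theorem IsCompact.lineSection {E : Type*} [NormedAddCommGroup E] [NormedSpace ℝ E] {K : Set E}
    (hK : IsCompact K) (p : E) {u : E} (hu : ‖u‖ = 1) : IsCompact (lineSection K p u) := by
  have : Isometry fun t : ℝ => p + t • u := Isometry.of_dist_eq fun s t => by
    rw [dist_add_left, dist_eq_norm, ← sub_smul, norm_smul, hu, mul_one, Real.dist_eq,
      Real.norm_eq_abs]
  exact this.isClosedEmbedding.isCompact_preimage hK

theorem Convex.ofReal_sub_le_volume {S : Set ℝ} (hS : Convex ℝ S) {a b : ℝ} (ha : a ∈ S)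
    (hb : b ∈ S) : ENNReal.ofReal (b - a) ≤ volume S := by
  rw [← Real.volume_Icc]
  exact measure_mono (hS.ordConnected.out ha hb)

section LineCoordinates

variable {E : Type*} [NormedAddCommGroup E] [InnerProductSpace ℝ E] [FiniteDimensional ℝ E]
  [MeasurableSpace E] [BorelSpace E]

theorem exists_measurePreserving_lineCoords {u : E} (hu : ‖u‖ = 1) :
    ∃ (m : ℕ) (Φ : ℝ × (Fin m → ℝ) ≃ᵐ E), MeasurePreserving Φ ∧
      ∀ t y, Φ (t, y) = Φ (0, y) + t • u := by
  have : Nontrivial E := nontrivial_of_ne u 0 (by rintro rfl; simp at hu)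
  obtain ⟨m, hm⟩ : ∃ m, Module.finrank ℝ E = m + 1 :=
    Nat.exists_eq_add_one.2 Module.finrank_pos
  have hu' : Orthonormal ℝ (({0} : Set (Fin (m + 1))).domRestrict fun _ => u) :=
    ⟨fun _ => hu, fun i j hij => (hij (Subtype.ext (i.2.trans j.2.symm))).elim⟩
  obtain ⟨b, hb⟩ := hu'.exists_orthonormalBasis_extension_of_card_eq (by simp [hm])
  refine ⟨m, ((MeasurableEquiv.piFinSuccAbove (fun _ => ℝ) 0).symm.trans
    (MeasurableEquiv.toLp 2 _)).trans b.measurableEquiv.symm, ?_, fun t y => ?_⟩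
  · exact ((volume_preserving_piFinSuccAbove (fun _ => ℝ) 0).symm _ |>.trans
      (PiLp.volume_preserving_toLp _)).trans b.measurePreserving_measurableEquiv.symm
  · have hsymm : ∀ x, b.measurableEquiv.symm x = b.repr.symm x := fun _ => rfl
    apply b.repr.injective
    ext i
    refine Fin.cases ?_ (fun j => ?_) i <;> simp [hsymm, ← hb 0 rfl]

theorem mul_volume_le_add_of_lineSection {u : E} (hu : ‖u‖ = 1) {A B C : Set E}
    (hA : NullMeasurableSet A) (c : ℝ≥0∞)
    (h : ∀ p, c * volume (lineSection A p u) ≤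
      volume (lineSection B p u) + volume (lineSection C p u)) :
    c * volume A ≤ volume B + volume C := by
  obtain ⟨m, Φ, hΦ, hΦu⟩ := exists_measurePreserving_lineCoords hu
  have hsec : ∀ S y, (fun t => (t, y)) ⁻¹' (Φ ⁻¹' S) = lineSection S (Φ (0, y)) u := by
    intro S y; ext t; rw [Set.mem_preimage, Set.mem_preimage, hΦu]; rfl
  have hmeas : ∀ S, MeasurableSet S →
      Measurable fun y => volume (lineSection S (Φ (0, y)) u) := by
    intro S hS
    simpa only [hsec] using measurable_measure_prodMk_right (hS.preimage Φ.measurable)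
  have hvol : ∀ S, MeasurableSet S →
      volume S = ∫⁻ y, volume (lineSection S (Φ (0, y)) u) := by
    intro S hS
    rw [← hΦ.measure_preimage_equiv, Measure.volume_eq_prod,
      Measure.prod_apply_symm (hS.preimage Φ.measurable)]
    simp only [hsec]
  obtain ⟨A', hA'A, hA', hAA'⟩ := hA.exists_measurable_subset_ae_eq
  have hB := measurableSet_toMeasurable volume B
  have hC := measurableSet_toMeasurable volume C
  calc c * volume A = ∫⁻ y, c * volume (lineSection A' (Φ (0, y)) u) := by
        rw [← measure_congr hAA', hvol A' hA', lintegral_const_mul _ (hmeas A' hA')]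
    _ ≤ ∫⁻ y, volume (lineSection (toMeasurable volume B) (Φ (0, y)) u) +
          volume (lineSection (toMeasurable volume C) (Φ (0, y)) u) := by
        refine lintegral_mono fun y => ?_
        grw [lineSection_mono hA'A, h, lineSection_mono (subset_toMeasurable volume B),
          lineSection_mono (subset_toMeasurable volume C)]
    _ = volume B + volume C := by
        rw [lintegral_add_left (hmeas _ hB), ← hvol _ hB, ← hvol _ hC,
          measure_toMeasurable, measure_toMeasurable]

end LineCoordinates

section Reflection

variable {n : ℕ}

def reflHull (K : Set (EuclideanSpace ℝ (Fin n))) (u : EuclideanSpace ℝ (Fin n)) :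
    Set (EuclideanSpace ℝ (Fin n)) :=
  convexHull ℝ (K ∪ reflHyp (suppFn K u) u '' K)

variable {K : Set (EuclideanSpace ℝ (Fin n))}

theorem reflHyp_neg (c : ℝ) (u : EuclideanSpace ℝ (Fin n)) :
    reflHyp c (-u) = reflHyp (-c) u := by
  funext x
  simp only [reflHyp, inner_neg_right]
  module

theorem reflHyp_add_smul {u : EuclideanSpace ℝ (Fin n)} (hu : ‖u‖ = 1) (c : ℝ)
    (p : EuclideanSpace ℝ (Fin n)) (t : ℝ) :
    reflHyp c u (p + t • u) = p + (2 * (c - inner ℝ p u) - t) • u := by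
  rw [reflHyp, inner_add_left, real_inner_smul_left, real_inner_self_eq_norm_sq, hu]
  module

theorem mem_lineSection_reflHyp {p u : EuclideanSpace ℝ (Fin n)} (hu : ‖u‖ = 1) (c : ℝ)
    {t : ℝ} (ht : t ∈ lineSection K p u) :
    2 * (c - inner ℝ p u) - t ∈ lineSection (reflHyp c u '' K) p u :=
  ⟨_, ht, reflHyp_add_smul hu c p t⟩

theorem le_suppFn (hK : IsCompact K) {x : EuclideanSpace ℝ (Fin n)} (hx : x ∈ K)
    (u : EuclideanSpace ℝ (Fin n)) : inner ℝ x u ≤ suppFn K u :=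
  le_csSup (hK.image (by fun_prop)).bddAbove ⟨x, hx, rfl⟩

theorem inner_sub_le_widthFn (hK : IsCompact K) {x y : EuclideanSpace ℝ (Fin n)} (hx : x ∈ K)
    (hy : y ∈ K) (u : EuclideanSpace ℝ (Fin n)) : inner ℝ (x - y) u ≤ widthFn K u := by
  have hy' := le_suppFn hK hy (-u)
  rw [inner_neg_right] at hy'
  rw [inner_sub_left, widthFn]
  linarith [le_suppFn hK hx u]

theorem suppFn_le_of_subset_closedBall {R : ℝ} (hR : 0 ≤ R) (hKR : K ⊆ closedBall 0 R)
    {u : EuclideanSpace ℝ (Fin n)} (hu : ‖u‖ = 1) : suppFn K u ≤ R := by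
  refine Real.sSup_le ?_ hR
  rintro _ ⟨x, hx, rfl⟩
  calc inner ℝ x u ≤ ‖x‖ * ‖u‖ := real_inner_le_norm x u
    _ ≤ R := by simpa [hu] using hKR hx

theorem reflHull_subset_closedBall (hK : IsCompact K) {R : ℝ} (hR : 0 ≤ R)
    (hKR : K ⊆ closedBall 0 R) {u : EuclideanSpace ℝ (Fin n)} (hu : ‖u‖ = 1) :
    reflHull K u ⊆ closedBall 0 (5 * R) := by
  refine convexHull_min (Set.union_subset ?_ ?_) (convex_closedBall 0 _)
  · exact hKR.trans (closedBall_subset_closedBall (by linarith))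
  rintro _ ⟨x, hx, rfl⟩
  have hxR : ‖x‖ ≤ R := by simpa using hKR hx
  have hlow : -R ≤ inner ℝ x u := by
    have := real_inner_le_norm (-x) u
    rw [inner_neg_left, norm_neg, hu, mul_one] at this
    linarith
  have hx_le := le_suppFn hK hx u
  have hsupp_le := suppFn_le_of_subset_closedBall hR hKR hu
  rw [mem_closedBall_zero_iff, reflHyp]
  calc ‖x + (2 * (suppFn K u - inner ℝ x u)) • u‖
      ≤ ‖x‖ + 2 * (suppFn K u - inner ℝ x u) := by
        grw [norm_add_le, norm_smul, hu, mul_one, Real.norm_of_nonneg (by linarith)]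
    _ ≤ 5 * R := by linarith

theorem two_mul_volume_lineSection_le (hK : IsCompact K) {u : EuclideanSpace ℝ (Fin n)}
    (hu : ‖u‖ = 1) {d : ℝ} (hd : 0 ≤ d) (hdw : d ≤ widthFn K u)
    (p : EuclideanSpace ℝ (Fin n)) :
    2 * volume (lineSection (K + segment ℝ 0 (d • u)) p u) ≤
      volume (lineSection (reflHull K u) p u) + volume (lineSection (reflHull K (-u)) p u) := by
  have hsub := lineSection_add_segment_subset K p u hd
  rcases (lineSection K p u).eq_empty_or_nonempty with hI | hI
  · rw [hI, Set.empty_add, Set.subset_empty_iff] at hsub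
    simp [hsub]
  obtain ⟨a, haK, ha⟩ := (hK.lineSection p hu).exists_isLeast hI
  obtain ⟨b, hbK, hb⟩ := (hK.lineSection p hu).exists_isGreatest hI
  have hC : volume (lineSection (K + segment ℝ 0 (d • u)) p u) ≤
      ENNReal.ofReal (b + d - a) := by
    rw [← Real.volume_Icc]
    refine measure_mono (hsub.trans ?_)
    rintro _ ⟨t, ht, s, hs, rfl⟩
    exact ⟨by linarith [ha ht, hs.1], by linarith [hb ht, hs.2]⟩
  have hT : ENNReal.ofReal (2 * (suppFn K u - inner ℝ p u) - a - a) ≤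
      volume (lineSection (reflHull K u) p u) :=
    ((convex_convexHull ℝ _).lineSection p u).ofReal_sub_le_volume
      (subset_convexHull ℝ _ (Or.inl haK))
      (subset_convexHull ℝ _ (Or.inr (mem_lineSection_reflHyp hu _ haK)))
  have hB : ENNReal.ofReal (b - (2 * (-suppFn K (-u) - inner ℝ p u) - b)) ≤
      volume (lineSection (reflHull K (-u)) p u) := by
    have hrefl := mem_lineSection_reflHyp hu (-suppFn K (-u)) hbK
    rw [← reflHyp_neg] at hrefl
    exact ((convex_convexHull ℝ _).lineSection p u).ofReal_sub_le_volume
      (subset_convexHull ℝ _ (Or.inr hrefl)) (subset_convexHull ℝ _ (Or.inl hbK))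
  rw [widthFn] at hdw
  calc 2 * volume (lineSection (K + segment ℝ 0 (d • u)) p u)
      ≤ ENNReal.ofReal (2 * (b + d - a)) := by
        grw [hC, ENNReal.ofReal_mul zero_le_two, ENNReal.ofReal_ofNat]
    _ ≤ ENNReal.ofReal ((2 * (suppFn K u - inner ℝ p u) - a - a) +
          (b - (2 * (-suppFn K (-u) - inner ℝ p u) - b))) :=
        ENNReal.ofReal_le_ofReal (by linarith)
    _ ≤ _ := ENNReal.ofReal_add_le.trans (add_le_add hT hB)

theorem two_mul_volume_convexHull_union_vadd_le (hKc : Convex ℝ K) (hK : IsCompact K)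
    {u : EuclideanSpace ℝ (Fin n)} (hu : ‖u‖ = 1) {d : ℝ} (hd : 0 ≤ d)
    (hdw : d ≤ widthFn K u) :
    2 * volume (convexHull ℝ (K ∪ ((d • u) +ᵥ K))) ≤
      volume (reflHull K u) + volume (reflHull K (-u)) := by
  grw [convexHull_union_vadd_subset hKc]
  exact mul_volume_le_add_of_lineSection hu
    ((hKc.add (convex_segment 0 _)).nullMeasurableSet volume) 2
    (two_mul_volume_lineSection_le hK hu hd hdw)

theorem exists_volume_convexHull_union_vadd_le (hKc : Convex ℝ K) (hK : IsCompact K)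
    {v : EuclideanSpace ℝ (Fin n)} (hv : v ≠ 0) (hmeet : (K ∩ (v +ᵥ K)).Nonempty) :
    ∃ w, ‖w‖ = 1 ∧
      volume (convexHull ℝ (K ∪ (v +ᵥ K))) ≤ volume (reflHull K w) := by
  set u := ‖v‖⁻¹ • v
  have hu : ‖u‖ = 1 := norm_smul_inv_norm hv
  have hdw : ‖v‖ ≤ widthFn K u := by
    obtain ⟨_, hx, y, hy, rfl⟩ := hmeet
    calc ‖v‖ = inner ℝ ((v +ᵥ y) - y) u := by
          rw [vadd_eq_add, add_sub_cancel_right, real_inner_smul_right,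
            real_inner_self_eq_norm_sq]
          field_simp
      _ ≤ widthFn K u := inner_sub_le_widthFn hK hx hy u
  have key := two_mul_volume_convexHull_union_vadd_le hKc hK hu (norm_nonneg v) hdw
  rw [smul_inv_smul₀ (norm_ne_zero_iff.2 hv)] at key
  have hmax : volume (convexHull ℝ (K ∪ (v +ᵥ K))) ≤
      max (volume (reflHull K u)) (volume (reflHull K (-u))) := by
    refine (ENNReal.mul_le_mul_iff_right two_ne_zero ENNReal.ofNat_ne_top).1 (key.trans ?_)
    rw [two_mul]
    exact add_le_add (le_max_left _ _) (le_max_right _ _)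
  rcases max_choice (volume (reflHull K u)) (volume (reflHull K (-u))) with h | h
  · exact ⟨u, hu, h ▸ hmax⟩
  · exact ⟨-u, by rwa [norm_neg], h ▸ hmax⟩

theorem le_crefl_of_volume_le_reflHull (hK : IsCompact K) {w : EuclideanSpace ℝ (Fin n)}
    (hw : ‖w‖ = 1) {S : Set (EuclideanSpace ℝ (Fin n))}
    (hS : volume S ≤ volume (reflHull K w)) :
    (volume S).toReal / (volume K).toReal ≤ crefl K := by
  obtain ⟨R, hR, hKR⟩ := hK.isBounded.subset_closedBall_lt 0 0
  have hball := fun u (hu : ‖u‖ = 1) => reflHull_subset_closedBall hK hR.le hKR hu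
  have hbdd : BddAbove {r : ℝ | ∃ u : EuclideanSpace ℝ (Fin n), ‖u‖ = 1 ∧
      r = (volume (reflHull K u)).toReal / (volume K).toReal} := by
    refine ⟨(volume (closedBall (0 : EuclideanSpace ℝ (Fin n)) (5 * R))).toReal /
      (volume K).toReal, ?_⟩
    rintro _ ⟨u, hu, rfl⟩
    gcongr
    exacts [measure_closedBall_lt_top.ne, hball u hu]
  have hfin : volume (reflHull K w) ≠ ⊤ :=
    ((measure_mono (hball w hw)).trans_lt measure_closedBall_lt_top).ne
  exact (div_le_div_of_nonneg_right (ENNReal.toReal_mono hfin hS) ENNReal.toReal_nonneg).trans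
    (le_csSup hbdd ⟨w, hw, rfl⟩)

end Reflection

theorem crefl_ge_ctr_general {n : ℕ}
    (K : Set (EuclideanSpace ℝ (Fin n))) (hK : IsConvexBody K) :
    crefl K ≥ ctr K := by
  obtain ⟨hKc, hKcomp, hint⟩ := hK
  refine Real.sSup_le ?_ (Real.sSup_nonneg ?_)
  · rintro _ ⟨v, ⟨hmeet, hdisj⟩, rfl⟩
    have hv : v ≠ 0 := by
      rintro rfl
      rw [zero_vadd, disjoint_self, Set.bot_eq_empty] at hdisj
      exact hint.ne_empty hdisj
    obtain ⟨w, hw, hle⟩ := exists_volume_convexHull_union_vadd_le hKc hKcomp hv hmeet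
    exact le_crefl_of_volume_le_reflHull hKcomp hw hle
  · rintro _ ⟨u, -, rfl⟩
    positivity

/-- For every convex body, `c_{n-1}(K) ≥ c^{tr}(K)`. -/
theorem crefl_ge_ctr {n : ℕ} (hn : 1 ≤ n)
    (K : Set (EuclideanSpace ℝ (Fin n))) (hK : IsConvexBody K) :
    crefl K ≥ ctr K :=
  crefl_ge_ctr_general K hK
end
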